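/- arXiv:1909.10844 — 2 statements merged into one kernel-verified Lean document; each statement's English description precedes it below -/
import Mathlib

section
/- Let Π_{0,2}(x) denote the number of positive integers n ≤ x such that the image of B_n(t) under the coefficientwise reduction map ℤ[t] → (ℤ/2ℤ)[t] equals the constant polynomial 1. Then there exists x₀ such that for every natural number x ≥ x₀, writing L = ⌊log₂ x⌋, one has 2·Π_{0,2}(x) ≥ L² − 3L + 4. -/
open Polynomial

/-- The Stern polynomials: `B 0 = 0`, `B 1 = 1`, `B (2n) = t * B n`,
`B (2n+1) = B n + B (n+1)`. -/
noncomputable def sternPoly : ℕ → Polynomial ℤ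
  | 0 => 0
  | 1 => 1
  | n + 2 =>
    if h : (n + 2) % 2 = 0 then X * sternPoly ((n + 2) / 2)
    else sternPoly ((n + 2) / 2) + sternPoly ((n + 2) / 2 + 1)
decreasing_by all_goals omega



abbrev R2 := Polynomial (ZMod 2)

noncomputable def PP (n : ℕ) : R2 := (sternPoly n).map (Int.castRingHom (ZMod 2))
noncomputable def cc (n : ℕ) : R2 := (X + 1) * PP n + PP (n + 1)
noncomputable def sg (a : ℕ) : R2 := ∑ i ∈ Finset.range a, X ^ i

lemma two0 : (2 : R2) = 0 := by
  have h := CharP.cast_eq_zero R2 2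
  exact_mod_cast h

lemma stern_even (n : ℕ) : sternPoly (2 * n) = X * sternPoly n := by
  match n with
  | 0 => simp [sternPoly]
  | m + 1 =>
    have h : 2 * (m + 1) = (2 * m) + 2 := by ring
    rw [h, sternPoly]
    have h2 : (2 * m + 2) % 2 = 0 := by omega
    simp only [h2, dif_pos]
    have h3 : (2 * m + 2) / 2 = m + 1 := by omega
    rw [h3]

lemma stern_odd (n : ℕ) : sternPoly (2 * n + 1) = sternPoly n + sternPoly (n + 1) := by
  match n with
  | 0 => simp [sternPoly]
  | m + 1 =>
    have h : 2 * (m + 1) + 1 = (2 * m + 1) + 2 := by ring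
    rw [h, sternPoly]
    have h2 : (2 * m + 1 + 2) % 2 = 1 := by omega
    simp only [h2, dif_neg, Nat.one_ne_zero, not_false_iff]
    have h3 : (2 * m + 1 + 2) / 2 = m + 1 := by omega
    rw [h3]

lemma PP0 : PP 0 = 0 := by simp [PP, sternPoly]
lemma PP1 : PP 1 = 1 := by simp [PP, sternPoly]
lemma PPeven (n : ℕ) : PP (2 * n) = X * PP n := by
  rw [PP, stern_even, Polynomial.map_mul, Polynomial.map_X, PP]
lemma PPodd (n : ℕ) : PP (2 * n + 1) = PP n + PP (n + 1) := by
  rw [PP, stern_odd, Polynomial.map_add, PP, PP]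
lemma PP2 : PP 2 = X := by
  have := PPeven 1
  simpa [PP1] using this

lemma cc1 : cc 1 = 1 := by
  rw [cc, PP1, PP2]
  linear_combination X * two0

lemma cc_odd (n : ℕ) : cc (2 * n + 1) = cc n := by
  rw [cc, cc, PPodd]
  have h : (2 * n + 1 + 1) = 2 * (n + 1) := by ring
  rw [h, PPeven]
  linear_combination (X * PP (n + 1)) * two0

lemma cc_even (n : ℕ) : cc (2 * n) = cc n + X ^ 2 * PP n := by
  rw [cc, cc]
  have h : (2 * n + 1) = 2 * n + 1 := rfl
  rw [PPeven, PPodd]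
  ring

def app1 (j m : ℕ) : ℕ := (m + 1) * 2 ^ j - 1
def app0 (a m : ℕ) : ℕ := 2 ^ a * m

lemma app1_zero (m : ℕ) : app1 0 m = m := by simp [app1]

lemma app1_succ (j m : ℕ) : app1 (j + 1) m = 2 * app1 j m + 1 := by
  have h : 1 ≤ (m + 1) * 2 ^ j := Nat.one_le_iff_ne_zero.mpr (by positivity)
  have ht : (m + 1) * 2 ^ (j + 1) = 2 * ((m + 1) * 2 ^ j) := by rw [pow_succ]; ring
  simp only [app1, ht]
  omega

lemma app0_zero (m : ℕ) : app0 0 m = m := by simp [app0]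

lemma app0_succ (a m : ℕ) : app0 (a + 1) m = 2 * app0 a m := by
  simp only [app0, pow_succ]; ring

lemma sg_zero : sg 0 = 0 := by simp [sg]
lemma sg_one : sg 1 = 1 := by simp [sg]
lemma sg_succ (a : ℕ) : sg (a + 1) = X * sg a + 1 := geom_sum_succ
lemma sg_succ' (a : ℕ) : sg (a + 1) = sg a + X ^ a := Finset.sum_range_succ _ _

lemma cc_app1 (j m : ℕ) : cc (app1 j m) = cc m := by
  induction j with
  | zero => rw [app1_zero]
  | succ j ih => rw [app1_succ, cc_odd, ih]

lemma PP_app1 (j m : ℕ) : PP (app1 j m) = X ^ j * PP m + sg j * cc m := by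
  induction j with
  | zero => rw [app1_zero, sg_zero]; ring
  | succ j ih =>
    rw [app1_succ, PPodd]
    have hq : PP (app1 j m + 1) = cc (app1 j m) - (X + 1) * PP (app1 j m) := by
      rw [cc]; ring
    rw [hq, cc_app1, ih, sg_succ]
    linear_combination (-(X ^ (j + 1) * PP m) - X * sg j * cc m) * two0

lemma PP_app0 (a m : ℕ) : PP (app0 a m) = X ^ a * PP m := by
  induction a with
  | zero => rw [app0_zero]; ring
  | succ a ih => rw [app0_succ, PPeven, ih]; ring

lemma cc_app0 (a m : ℕ) : cc (app0 a m) = cc m + X ^ 2 * sg a * PP m := by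
  induction a with
  | zero => rw [app0_zero, sg_zero]; ring
  | succ a ih => rw [app0_succ, cc_even, ih, PP_app0, sg_succ']; ring

lemma PP_4q1 (q : ℕ) : PP (4 * q + 1) = cc q := by
  have h : 4 * q + 1 = 2 * (2 * q) + 1 := by ring
  rw [h, PPodd, PPeven, cc]
  have h2 : 2 * q + 1 = 2 * q + 1 := rfl
  rw [PPodd]
  ring
lemma sg_two : sg 2 = X + 1 := by rw [sg_succ, sg_one]; ring

lemma PP_u (k : ℕ) : PP (app1 k 1) = sg (k + 1) := by
  rw [PP_app1, PP1, cc1, sg_succ']; ring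

lemma cc_u (k : ℕ) : cc (app1 k 1) = 1 := by rw [cc_app1, cc1]

lemma hXk (k : ℕ) : (X : R2) ^ (k + 1) = X * sg (k + 1) + 1 - sg (k + 1) := by
  have h1 := sg_succ' (k + 1)
  have h2 := sg_succ (k + 1)
  linear_combination h2 - h1

lemma hsg3 (k : ℕ) : sg (k + 3) = X ^ 2 * sg (k + 1) + X + 1 := by
  have h2 := sg_succ (k + 1)
  have h3 := sg_succ (k + 2)
  linear_combination h3 + X * h2

def M1 (k : ℕ) : ℕ := app0 (k + 1) (app1 1 (app0 1 (app1 k 1)))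
def M2a (k : ℕ) : ℕ := app0 (k + 1) (app1 (k + 3) (app0 2 (app1 k 1)))
def M2b (k : ℕ) : ℕ := app0 (k + 1) (app1 2 (app0 (k + 3) (app1 k 1)))

lemma cc_M1 (k : ℕ) : cc (M1 k) = 1 := by
  rw [M1, cc_app0, cc_app1, PP_app1, cc_app0, PP_app0, cc_u, PP_u, sg_one]
  linear_combination (X ^ 2 * sg (k + 1) + X ^ 4 * sg (k + 1) ^ 2) * two0

lemma cc_M2a (k : ℕ) : cc (M2a k) = 1 := by
  rw [M2a, cc_app0, cc_app1, PP_app1, cc_app0, PP_app0, cc_u, PP_u, sg_two, hsg3]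
  linear_combination (X ^ 6 * sg (k + 1) ^ 2) * hXk k +
    (X ^ 2 * sg (k + 1) + X ^ 3 * sg (k + 1) + X ^ 4 * sg (k + 1) ^ 2 +
      X ^ 5 * sg (k + 1) ^ 2 + X ^ 6 * sg (k + 1) ^ 2 + X ^ 7 * sg (k + 1) ^ 3) * two0

lemma cc_M2b (k : ℕ) : cc (M2b k) = 1 := by
  rw [M2b, cc_app0, cc_app1, PP_app1, cc_app0, PP_app0, cc_u, PP_u, sg_two, hsg3]
  linear_combination (X ^ 6 * sg (k + 1) ^ 2) * hXk k +
    (X ^ 2 * sg (k + 1) + X ^ 3 * sg (k + 1) + X ^ 4 * sg (k + 1) ^ 2 +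
      X ^ 5 * sg (k + 1) ^ 2 + X ^ 6 * sg (k + 1) ^ 2 + X ^ 7 * sg (k + 1) ^ 3) * two0
lemma app1_add_one (j m : ℕ) : app1 j m + 1 = (m + 1) * 2 ^ j := by
  have h : 1 ≤ (m + 1) * 2 ^ j := Nat.one_le_iff_ne_zero.mpr (by positivity)
  simp only [app1]
  omega

lemma odd_mul_pow : ∀ x : ℕ, ∀ {o o' y : ℕ}, o % 2 = 1 → o' % 2 = 1 →
    o * 2 ^ x = o' * 2 ^ y → o = o' ∧ x = y := by
  intro x
  induction x with
  | zero =>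
    intro o o' y h1 h2 h
    cases y with
    | zero => simpa using h
    | succ y =>
      exfalso
      have ho : o = o' * 2 ^ y * 2 := by
        rw [pow_succ] at h; simpa [mul_assoc] using h
      have : o % 2 = 0 := by rw [ho, Nat.mul_mod_left]
      omega
  | succ x ih =>
    intro o o' y h1 h2 h
    cases y with
    | zero =>
      exfalso
      have ho : o' = o * 2 ^ x * 2 := by
        rw [pow_succ] at h; simp only [pow_zero, mul_one] at h
        rw [← h]; ring
      have : o' % 2 = 0 := by rw [ho, Nat.mul_mod_left]
      omega
    | succ y =>
      have h' : (o * 2 ^ x) * 2 = (o' * 2 ^ y) * 2 := by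
        rw [pow_succ, ← mul_assoc] at h
        rw [pow_succ, ← mul_assoc] at h
        exact h
      have h'' : o * 2 ^ x = o' * 2 ^ y :=
        Nat.eq_of_mul_eq_mul_right (by norm_num) h'
      have := ih h1 h2 h''
      exact ⟨this.1, by omega⟩

def W : ℕ → ℕ → ℕ := fun i k =>
  if i = 0 then app1 1 (app0 1 (app1 k 1))
  else if i = 1 then app1 (k + 3) (app0 2 (app1 k 1))
  else app1 2 (app0 (k + 3) (app1 k 1))

def MM : ℕ → ℕ → ℕ := fun i k =>
  if i = 0 then M1 k else if i = 1 then M2a k else M2b k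

lemma MM_eq (i k : ℕ) : MM i k = 2 ^ (k + 1) * W i k := by
  by_cases h0 : i = 0
  · simp [MM, W, h0, M1, app0]
  by_cases h1 : i = 1
  · simp [MM, W, h0, h1, M2a, app0]
  · simp [MM, W, h0, h1, M2b, app0]

lemma app1_succ_odd (j m : ℕ) : app1 (j + 1) m % 2 = 1 := by
  rw [app1_succ]; omega

lemma W_odd (i k : ℕ) : W i k % 2 = 1 := by
  by_cases h0 : i = 0
  · simp only [W, h0, if_true]
    exact app1_succ_odd 0 _
  by_cases h1 : i = 1
  · simp only [W, h0, h1, if_false, if_true]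
    exact app1_succ_odd (k + 2) _
  · simp only [W, h0, h1, if_false]
    exact app1_succ_odd 1 _

lemma MM_even (i k : ℕ) : MM i k % 2 = 0 := by
  rw [MM_eq]
  have h : 2 ^ (k + 1) * W i k = 2 * (2 ^ k * W i k) := by rw [pow_succ]; ring
  rw [h, Nat.mul_mod_right]

lemma u_add_one (k : ℕ) : app1 k 1 + 1 = 2 * 2 ^ k := by
  rw [app1_add_one]

lemma W0_add_one (k : ℕ) : W 0 k + 1 = 8 * 2 ^ k - 2 := by
  have hu := u_add_one k
  have h1 : 1 ≤ 2 ^ k := Nat.one_le_two_pow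
  simp only [W, if_true]
  rw [app1_add_one]
  simp only [app0, pow_one]
  omega

lemma W1_add_one (k : ℕ) : W 1 k + 1 = 64 * (2 ^ k * 2 ^ k) - 24 * 2 ^ k := by
  have hu := u_add_one k
  have h1 : 1 ≤ 2 ^ k := Nat.one_le_two_pow
  have hW : W 1 k = app1 (k + 3) (app0 2 (app1 k 1)) := by simp [W]
  rw [hW, app1_add_one]
  have h2 : app0 2 (app1 k 1) + 1 = 8 * 2 ^ k - 3 := by
    simp only [app0]
    norm_num
    omega
  rw [h2]
  have hp : (2 : ℕ) ^ (k + 3) = 8 * 2 ^ k := by rw [pow_add]; ring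
  rw [hp, Nat.sub_mul]
  have e1 : 8 * 2 ^ k * (8 * 2 ^ k) = 64 * (2 ^ k * 2 ^ k) := by ring
  have e2 : 3 * (8 * 2 ^ k) = 24 * 2 ^ k := by ring
  rw [e1, e2]

lemma W2_add_one (k : ℕ) : W 2 k + 1 = 64 * (2 ^ k * 2 ^ k) - 32 * 2 ^ k + 4 := by
  have hu := u_add_one k
  have h1 : 1 ≤ 2 ^ k := Nat.one_le_two_pow
  have hab : 2 ^ k ≤ 2 ^ k * 2 ^ k := Nat.le_mul_of_pos_left _ (by omega)
  have hW : W 2 k = app1 2 (app0 (k + 3) (app1 k 1)) := by simp [W]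
  rw [hW, app1_add_one]
  have hp : (2 : ℕ) ^ (k + 3) = 8 * 2 ^ k := by rw [pow_add]; ring
  have h2 : app0 (k + 3) (app1 k 1) = 16 * (2 ^ k * 2 ^ k) - 8 * 2 ^ k := by
    simp only [app0, hp]
    have hu' : app1 k 1 = 2 * 2 ^ k - 1 := by omega
    rw [hu', Nat.mul_sub]
    have e1 : 8 * 2 ^ k * (2 * 2 ^ k) = 16 * (2 ^ k * 2 ^ k) := by ring
    rw [e1, mul_one]
  rw [h2]
  norm_num
  omega
lemma MM_inj {i k i' k' : ℕ} (hi : i < 3) (hi' : i' < 3) (h : MM i k = MM i' k') :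
    i = i' ∧ k = k' := by
  rw [MM_eq, MM_eq] at h
  rw [mul_comm (2 ^ (k + 1)) (W i k), mul_comm (2 ^ (k' + 1)) (W i' k')] at h
  obtain ⟨hw, hk⟩ := odd_mul_pow (k + 1) (W_odd i k) (W_odd i' k') h
  have hkk : k = k' := by omega
  subst hkk
  refine ⟨?_, rfl⟩
  by_contra hne
  have h1 : 1 ≤ (2 : ℕ) ^ k := Nat.one_le_two_pow
  have hab : 2 ^ k ≤ 2 ^ k * 2 ^ k := Nat.le_mul_of_pos_left _ (by omega)
  have e0 := W0_add_one k
  have e1 := W1_add_one k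
  have e2 := W2_add_one k
  interval_cases i <;> interval_cases i' <;> omega

lemma MM0_size (k : ℕ) : MM 0 k + 1 ≤ 2 ^ (2 * k + 4) := by
  have h1 : 1 ≤ (2 : ℕ) ^ k := Nat.one_le_two_pow
  have hW : W 0 k + 1 ≤ 2 ^ (k + 3) := by
    have := W0_add_one k
    have hp : (2 : ℕ) ^ (k + 3) = 8 * 2 ^ k := by rw [pow_add]; ring
    omega
  have hMM := MM_eq 0 k
  calc MM 0 k + 1 ≤ 2 ^ (k + 1) * (W 0 k + 1) := by
        rw [hMM, Nat.mul_add, mul_one]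
        have : 1 ≤ 2 ^ (k + 1) := Nat.one_le_two_pow
        omega
    _ ≤ 2 ^ (k + 1) * 2 ^ (k + 3) := Nat.mul_le_mul_left _ hW
    _ = 2 ^ (2 * k + 4) := by rw [← pow_add]; congr 1; omega

lemma MM12_size (i k : ℕ) (hi : i = 1 ∨ i = 2) : MM i k + 1 ≤ 2 ^ (3 * k + 7) := by
  have h1 : 1 ≤ (2 : ℕ) ^ k := Nat.one_le_two_pow
  have hab : 2 ^ k ≤ 2 ^ k * 2 ^ k := Nat.le_mul_of_pos_left _ (by omega)
  have hW : W i k + 1 ≤ 2 ^ (2 * k + 6) := by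
    have hp : (2 : ℕ) ^ (2 * k + 6) = 64 * (2 ^ k * 2 ^ k) := by
      rw [show 2 * k + 6 = k + (k + 6) from by omega, pow_add, pow_add]
      ring
    rcases hi with h | h <;> subst h
    · have := W1_add_one k; omega
    · have := W2_add_one k; omega
  have hMM := MM_eq i k
  calc MM i k + 1 ≤ 2 ^ (k + 1) * (W i k + 1) := by
        rw [hMM, Nat.mul_add, mul_one]
        have : 1 ≤ 2 ^ (k + 1) := Nat.one_le_two_pow
        omega
    _ ≤ 2 ^ (k + 1) * 2 ^ (2 * k + 6) := Nat.mul_le_mul_left _ hW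
    _ = 2 ^ (3 * k + 7) := by rw [← pow_add]; congr 1; omega

lemma cc_MM (i k : ℕ) (hi : i < 3) : cc (MM i k) = 1 := by
  interval_cases i
  · simpa [MM] using cc_M1 k
  · simpa [MM] using cc_M2a k
  · simpa [MM] using cc_M2b k

lemma PP_N (m j : ℕ) (h : cc m = 1) : PP (4 * app1 j m + 1) = 1 := by
  rw [PP_4q1, cc_app1, h]

lemma N_add_three (m j : ℕ) : (4 * app1 j m + 1) + 3 = (m + 1) * 2 ^ (j + 2) := by
  have h1 := app1_add_one j m
  have h2 : (m + 1) * 2 ^ (j + 2) = 4 * ((m + 1) * 2 ^ j) := by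
    rw [pow_add]; ring
  omega

lemma sum_lb (A c : ℕ) : ∀ K : ℕ, c * (K - 1) ≤ A →
    2 * ((∑ k ∈ Finset.range K, (A - c * k) : ℕ) : ℤ) =
      2 * (K : ℤ) * (A : ℤ) - (c : ℤ) * K * K + c * K := by
  intro K
  induction K with
  | zero => simp
  | succ K ih =>
    intro h
    have hK : c * K ≤ A := by simpa using h
    have h' : c * (K - 1) ≤ A := le_trans (Nat.mul_le_mul_left c (Nat.sub_le K 1)) hK
    rw [Finset.sum_range_succ]
    have e := ih h'
    have hcast : ((A - c * K : ℕ) : ℤ) = (A : ℤ) - (c : ℤ) * K := by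
      push_cast [Nat.cast_sub hK]
      ring
    push_cast [hcast] at e ⊢
    linear_combination e

open scoped Classical in
theorem lower_bound_Pi02 :
    ∃ x₀ : ℕ, ∀ x : ℕ, x₀ ≤ x →
      ((Nat.log 2 x : ℤ) ^ 2 - 3 * (Nat.log 2 x : ℤ) + 4) ≤
        2 * (((Finset.Icc 1 x).filter
          (fun n => (sternPoly n).map (Int.castRingHom (ZMod 2)) = 1)).card : ℤ) := by
  refine ⟨2 ^ 60, fun x hx => ?_⟩
  set L := Nat.log 2 x with hLdef
  have hL : 60 ≤ L := by
    have h1 : Nat.log 2 (2 ^ 60) = 60 := Nat.log_pow (by norm_num) 60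
    have h2 := Nat.log_mono_right (b := 2) hx
    omega
  have hx1 : 1 ≤ x := le_trans Nat.one_le_two_pow hx
  have h2L : 2 ^ L ≤ x := Nat.pow_log_le_self 2 (by omega)
  set t := (L - 6) / 2 with htdef
  set u := (L - 9) / 3 with hudef
  set T : Finset ((_ : ℕ) × (_ : ℕ) × ℕ) :=
    (Finset.range 3).sigma fun i =>
      (Finset.range (if i = 0 then t + 1 else u + 1)).sigma fun k =>
        Finset.range (if i = 0 then L - 5 - 2 * k else L - 8 - 3 * k) with hTdef
  have hmem : ∀ z ∈ T, (4 * app1 z.2.2 (MM z.1 z.2.1) + 1) ∈ (Finset.Icc 1 x).filter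
      (fun n => (sternPoly n).map (Int.castRingHom (ZMod 2)) = 1) := by
    rintro ⟨i, k, j⟩ hz
    simp only [hTdef, Finset.mem_sigma, Finset.mem_range] at hz
    obtain ⟨hi, hk, hj⟩ := hz
    dsimp only
    rw [Finset.mem_filter, Finset.mem_Icc]
    refine ⟨⟨by omega, ?_⟩, ?_⟩
    · -- ≤ x
      have h3 := N_add_three (MM i k) j
      have hle : (MM i k + 1) * 2 ^ (j + 2) ≤ 2 ^ L := by
        by_cases h0 : i = 0
        · subst h0
          norm_num at hk hj
          have hsz := MM0_size k
          have hexp : 2 * k + 4 + (j + 2) ≤ L := by omega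
          calc (MM 0 k + 1) * 2 ^ (j + 2) ≤ 2 ^ (2 * k + 4) * 2 ^ (j + 2) :=
                Nat.mul_le_mul_right _ hsz
            _ = 2 ^ (2 * k + 4 + (j + 2)) := by rw [← pow_add]
            _ ≤ 2 ^ L := Nat.pow_le_pow_right (by norm_num) hexp
        · simp only [if_neg h0] at hk hj
          have hsz := MM12_size i k (by omega)
          have hexp : 3 * k + 7 + (j + 2) ≤ L := by omega
          calc (MM i k + 1) * 2 ^ (j + 2) ≤ 2 ^ (3 * k + 7) * 2 ^ (j + 2) :=
                Nat.mul_le_mul_right _ hsz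
            _ = 2 ^ (3 * k + 7 + (j + 2)) := by rw [← pow_add]
            _ ≤ 2 ^ L := Nat.pow_le_pow_right (by norm_num) hexp
      omega
    · exact PP_N _ _ (cc_MM i k hi)
  have hinj : ∀ z ∈ T, ∀ z' ∈ T,
      (4 * app1 z.2.2 (MM z.1 z.2.1) + 1) = (4 * app1 z'.2.2 (MM z'.1 z'.2.1) + 1) →
      z = z' := by
    rintro ⟨i, k, j⟩ hz ⟨i', k', j'⟩ hz' hf
    simp only [hTdef, Finset.mem_sigma, Finset.mem_range] at hz hz'
    obtain ⟨hi, -, -⟩ := hz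
    obtain ⟨hi', -, -⟩ := hz'
    simp only at hf
    have h1 : app1 j (MM i k) = app1 j' (MM i' k') := by omega
    have h2 : (MM i k + 1) * 2 ^ j = (MM i' k' + 1) * 2 ^ j' := by
      have a1 := app1_add_one j (MM i k)
      have a2 := app1_add_one j' (MM i' k')
      omega
    have hodd1 : (MM i k + 1) % 2 = 1 := by have := MM_even i k; omega
    have hodd2 : (MM i' k' + 1) % 2 = 1 := by have := MM_even i' k'; omega
    obtain ⟨hM, hj⟩ := odd_mul_pow j hodd1 hodd2 h2
    obtain ⟨hii, hkk⟩ := MM_inj hi hi' (show MM i k = MM i' k' by omega)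
    subst hii; subst hkk; subst hj
    rfl
  have hcard : T.card ≤ ((Finset.Icc 1 x).filter
      (fun n => (sternPoly n).map (Int.castRingHom (ZMod 2)) = 1)).card := by
    apply Finset.card_le_card_of_injOn (s := T) (fun z => 4 * app1 z.2.2 (MM z.1 z.2.1) + 1) (fun z hz => hmem z (Finset.mem_coe.mp hz))
    intro a ha b hb hab
    exact hinj a (by simpa using ha) b (by simpa using hb) hab
  have hc : T.card = (∑ k ∈ Finset.range (t + 1), (L - 5 - 2 * k)) +
      2 * (∑ k ∈ Finset.range (u + 1), (L - 8 - 3 * k)) := by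
    rw [hTdef, Finset.card_sigma]
    rw [Finset.sum_range_succ, Finset.sum_range_succ, Finset.sum_range_succ,
      Finset.sum_range_zero]
    simp only [Finset.card_sigma, Finset.card_range]
    norm_num
    omega
  have ht1 : 2 * t ≤ L - 6 := by omega
  have hu1 : 3 * u ≤ L - 9 := by omega
  have e1 := sum_lb (L - 5) 2 (t + 1) (by omega)
  have e2 := sum_lb (L - 8) 3 (u + 1) (by omega)
  have hL5 : ((L - 5 : ℕ) : ℤ) = (L : ℤ) - 5 := by omega
  have hL8 : ((L - 8 : ℕ) : ℤ) = (L : ℤ) - 8 := by omega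
  rw [hL5] at e1
  rw [hL8] at e2
  have htz1 : 2 * (t : ℤ) ≤ (L : ℤ) - 6 := by omega
  have htz2 : (L : ℤ) - 6 ≤ 2 * (t : ℤ) + 1 := by omega
  have huz1 : 3 * (u : ℤ) ≤ (L : ℤ) - 9 := by omega
  have huz2 : (L : ℤ) - 9 ≤ 3 * (u : ℤ) + 2 := by omega
  have hLz : (60 : ℤ) ≤ (L : ℤ) := by omega
  have hcardz : ((T.card : ℤ)) ≤ (((Finset.Icc 1 x).filter
      (fun n => (sternPoly n).map (Int.castRingHom (ZMod 2)) = 1)).card : ℤ) := by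
    exact_mod_cast hcard
  have hTcz : (T.card : ℤ) = ((∑ k ∈ Finset.range (t + 1), (L - 5 - 2 * k) : ℕ) : ℤ) +
      2 * ((∑ k ∈ Finset.range (u + 1), (L - 8 - 3 * k) : ℕ) : ℤ) := by
    rw [hc]; push_cast; ring
  push_cast at e1 e2
  clear hmem hinj hc hcard hx hx1 h2L ht1 hu1 hL5 hL8
  have key : ((L : ℤ) ^ 2 - 3 * L + 4) ≤ 2 * (T.card : ℤ) := by
    rw [hTcz]
    push_cast
    nlinarith [mul_nonneg (by linarith : (0:ℤ) ≤ (L : ℤ) - 6 - 2 * t)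
        (by linarith : (0:ℤ) ≤ 1 - ((L : ℤ) - 6 - 2 * t)),
      mul_nonneg (by linarith : (0:ℤ) ≤ 2 - ((L : ℤ) - 9 - 3 * u))
        (by linarith : (0:ℤ) ≤ 1 + ((L : ℤ) - 9 - 3 * u)),
      mul_nonneg (by linarith : (0:ℤ) ≤ (L : ℤ) - 58)
        (by linarith : (0:ℤ) ≤ (L : ℤ) - 60)]
  linarith
end

section
/- For every integer n ≥ 1, with s_{0,n} = 2^{2n+4} − 9·2^{n+1} − 1, the image of B_{s_{0,n}}(t) under the coefficientwise reduction map ℤ[t] → (ℤ/2ℤ)[t] equals \sum_{i=0}^{2n+1} t^i; that is, B_{s_{0,n}}(t) has degree 2n+1 and all of its coefficients are odd. -/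
open Polynomial

/-- `s₀ n = 2^(2n+4) - 9·2^(n+1) - 1`. -/
def sSeq (n : ℕ) : ℕ := 2 ^ (2 * n + 4) - 9 * 2 ^ (n + 1) - 1

lemma sternPoly_even (m : ℕ) (hm : 1 ≤ m) : sternPoly (2 * m) = X * sternPoly m := by
  obtain ⟨k, rfl⟩ : ∃ k, m = k + 1 := ⟨m - 1, by omega⟩
  rw [show 2 * (k + 1) = 2 * k + 2 by ring, sternPoly]
  simp [Nat.mul_add_mod]

lemma sternPoly_odd (m : ℕ) (hm : 1 ≤ m) :
    sternPoly (2 * m + 1) = sternPoly m + sternPoly (m + 1) := by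
  obtain ⟨k, rfl⟩ : ∃ k, m = k + 1 := ⟨m - 1, by omega⟩
  rw [show 2 * (k + 1) + 1 = (2 * k + 1) + 2 by ring, sternPoly]
  rw [dif_neg (by omega)]
  congr 2 <;> omega

/-- The mod-2 reduction of the Stern polynomials. -/
noncomputable def sternF (n : ℕ) : Polynomial (ZMod 2) :=
  (sternPoly n).map (Int.castRingHom (ZMod 2))

/-- Abbreviation for `1 + X + ⋯ + X^(k-1)`. -/
noncomputable def SS (k : ℕ) : Polynomial (ZMod 2) :=
  ∑ i ∈ Finset.range k, (X : Polynomial (ZMod 2)) ^ i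

lemma sternF_one : sternF 1 = 1 := by simp [sternF, sternPoly]

lemma sternF_even (m : ℕ) (hm : 1 ≤ m) : sternF (2 * m) = X * sternF m := by
  simp [sternF, sternPoly_even m hm]

lemma sternF_odd (m : ℕ) (hm : 1 ≤ m) :
    sternF (2 * m + 1) = sternF m + sternF (m + 1) := by
  simp [sternF, sternPoly_odd m hm]

lemma sternF_two_pow_mul (t m : ℕ) (hm : 1 ≤ m) :
    sternF (2 ^ t * m) = X ^ t * sternF m := by
  induction t with
  | zero => simp
  | succ t ih =>
    rw [show 2 ^ (t + 1) * m = 2 * (2 ^ t * m) by ring,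
      sternF_even _ (Nat.mul_pos (Nat.two_pow_pos t) hm), ih]
    ring

lemma two_eq_zero' : (2 : Polynomial (ZMod 2)) = 0 := by
  have h : (2 : Polynomial (ZMod 2)) = C 2 := by
    have := Polynomial.C_eq_natCast (R := ZMod 2) 2
    push_cast at this
    exact this.symm
  rw [h, show ((2 : ZMod 2)) = 0 by decide, C_0]

lemma SS_succ (k : ℕ) : SS (k + 1) = SS k + X ^ k := Finset.sum_range_succ _ _

lemma SS_succ' (k : ℕ) : SS (k + 1) = 1 + X * SS k := by
  rw [SS, SS, Finset.sum_range_succ']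
  simp [Finset.mul_sum, pow_succ, add_comm, mul_comm]

lemma SS_one : SS 1 = 1 := by simp [SS]
lemma SS_two : SS 2 = 1 + X := by simp [SS, Finset.sum_range_succ]

lemma sternF_two_pow (k : ℕ) : sternF (2 ^ k) = X ^ k := by
  have := sternF_two_pow_mul k 1 le_rfl
  simpa [sternF_one] using this

lemma sternF_pow_sub_one (k : ℕ) (hk : 1 ≤ k) : sternF (2 ^ k - 1) = SS k := by
  induction k with
  | zero => omega
  | succ k ih =>
    rcases Nat.eq_or_lt_of_le hk with h | h
    · simp [← h, sternF_one, SS_one]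
    have hk1 : 1 ≤ k := by omega
    have hp : 1 ≤ 2 ^ k := Nat.one_le_two_pow
    have e : 2 ^ (k + 1) - 1 = 2 * (2 ^ k - 1) + 1 := by
      have : 2 ^ (k + 1) = 2 * 2 ^ k := by ring
      omega
    have h2 : 2 ≤ 2 ^ k := by
      calc 2 = 2 ^ 1 := rfl
      _ ≤ 2 ^ k := Nat.pow_le_pow_right (by norm_num) hk1
    rw [e, sternF_odd _ (by omega),
      show 2 ^ k - 1 + 1 = 2 ^ k by omega, sternF_two_pow, ih hk1, SS_succ]

lemma sternF_pow_sub_two (k : ℕ) (hk : 1 ≤ k) :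
    sternF (2 ^ (k + 1) - 2) = X * SS k := by
  have hp : 1 ≤ 2 ^ k := Nat.one_le_two_pow
  have e : 2 ^ (k + 1) - 2 = 2 * (2 ^ k - 1) := by
    have : 2 ^ (k + 1) = 2 * 2 ^ k := by ring
    omega
  have h2 : 2 ≤ 2 ^ k := by
    calc 2 = 2 ^ 1 := rfl
    _ ≤ 2 ^ k := Nat.pow_le_pow_right (by norm_num) hk
  rw [e, sternF_even _ (by omega), sternF_pow_sub_one k hk]

lemma sternF_pow_sub_three (k : ℕ) : sternF (2 ^ (k + 2) - 3) = 1 := by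
  cases k with
  | zero => norm_num; exact sternF_one
  | succ k =>
    have hp : 2 ≤ 2 ^ (k + 1) := by
      calc 2 = 2 ^ 1 := rfl
      _ ≤ 2 ^ (k + 1) := Nat.pow_le_pow_right (by norm_num) (by omega)
    have e : 2 ^ (k + 3) - 3 = 2 * (2 ^ (k + 2) - 2) + 1 := by
      have : 2 ^ (k + 3) = 2 * 2 ^ (k + 2) := by ring
      have : 2 ^ (k + 2) = 2 * 2 ^ (k + 1) := by ring
      omega
    have e2 : 2 ^ (k + 2) - 2 + 1 = 2 ^ (k + 2) - 1 := by
      have : 2 ^ (k + 2) = 2 * 2 ^ (k + 1) := by ring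
      omega
    rw [e, sternF_odd _ (by
      have : 2 ^ (k + 2) = 2 * 2 ^ (k + 1) := by ring
      omega), e2, sternF_pow_sub_two (k + 1) (by omega),
      sternF_pow_sub_one (k + 2) (by omega)]
    have h2 := two_eq_zero'
    linear_combination SS_succ' (k + 1) + (X * SS (k + 1)) * h2

lemma sternF_pow_sub_five (k : ℕ) : sternF (2 ^ (k + 3) - 5) = SS (k + 2) := by
  have hp : 4 ≤ 2 ^ (k + 2) := by
    calc 4 = 2 ^ 2 := rfl
    _ ≤ 2 ^ (k + 2) := Nat.pow_le_pow_right (by norm_num) (by omega)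
  have e : 2 ^ (k + 3) - 5 = 2 * (2 ^ (k + 2) - 3) + 1 := by
    have : 2 ^ (k + 3) = 2 * 2 ^ (k + 2) := by ring
    omega
  have e2 : 2 ^ (k + 2) - 3 + 1 = 2 ^ (k + 2) - 2 := by omega
  rw [e, sternF_odd _ (by omega), e2, sternF_pow_sub_three k,
    sternF_pow_sub_two (k + 1) (by omega)]
  exact (SS_succ' (k + 1)).symm

lemma sternF_pow_sub_nine (k : ℕ) :
    sternF (2 ^ (k + 4) - 9) = 1 + X + X ^ (k + 2) := by
  have hp : 8 ≤ 2 ^ (k + 3) := by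
    calc 8 = 2 ^ 3 := rfl
    _ ≤ 2 ^ (k + 3) := Nat.pow_le_pow_right (by norm_num) (by omega)
  have e : 2 ^ (k + 4) - 9 = 2 * (2 ^ (k + 3) - 5) + 1 := by
    have : 2 ^ (k + 4) = 2 * 2 ^ (k + 3) := by ring
    omega
  have e2 : 2 ^ (k + 3) - 5 + 1 = 2 ^ 2 * (2 ^ (k + 1) - 1) := by
    have h1 : 2 ^ (k + 3) = 4 * 2 ^ (k + 1) := by ring
    have h2 : 1 ≤ 2 ^ (k + 1) := Nat.one_le_two_pow
    have h3 : 2 ^ 2 * (2 ^ (k + 1) - 1) = 4 * 2 ^ (k + 1) - 4 := by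
      rw [Nat.mul_sub]; norm_num
    omega
  rw [e, sternF_odd _ (by omega), e2, sternF_pow_sub_five k,
    sternF_two_pow_mul 2 _ (by have : 1 ≤ 2 ^ (k + 1) := Nat.one_le_two_pow; omega),
    sternF_pow_sub_one (k + 1) (by omega)]
  -- goal : SS (k+2) + X^2 * SS (k+1) = 1 + X + X^(k+2)
  have h2 := two_eq_zero'
  have e3 : SS (k + 2) = 1 + X * SS (k + 1) := SS_succ' (k + 1)
  have e4 : SS (k + 2) = SS (k + 1) + X ^ (k + 1) := SS_succ (k + 1)
  -- X^2 * SS(k+1) = X * (SS(k+2) - 1) = X * SS(k+1) + X^(k+2) - X  ... use linear_combination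
  linear_combination e3 - X * e3 + X * e4 + (X * SS (k + 1) - X) * h2

/-- The key chain: `F (2^(a+5+j) - 9·2^(j+1) - 1) = X·S(a+2) + (1+X+X^(a+2))·S(j+1)`. -/
lemma sternF_chain (a j : ℕ) :
    sternF (2 ^ (a + 5 + j) - 9 * 2 ^ (j + 1) - 1) =
      X * SS (a + 2) + (1 + X + X ^ (a + 2)) * SS (j + 1) := by
  induction j with
  | zero =>
    have hp : 16 ≤ 2 ^ (a + 4) := by
      calc 16 = 2 ^ 4 := rfl
      _ ≤ 2 ^ (a + 4) := Nat.pow_le_pow_right (by norm_num) (by omega)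
    have e : 2 ^ (a + 5 + 0) - 9 * 2 ^ (0 + 1) - 1 = 2 * (2 ^ (a + 4) - 10) + 1 := by
      have : 2 ^ (a + 5 + 0) = 2 * 2 ^ (a + 4) := by ring
      omega
    have e2 : 2 ^ (a + 4) - 10 = 2 * (2 ^ (a + 3) - 5) := by
      have h1 : 2 ^ (a + 4) = 2 * 2 ^ (a + 3) := by ring
      have h3 : 8 ≤ 2 ^ (a + 3) := by
        calc 8 = 2 ^ 3 := rfl
        _ ≤ 2 ^ (a + 3) := Nat.pow_le_pow_right (by norm_num) (by omega)
      omega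
    have e3 : 2 ^ (a + 4) - 10 + 1 = 2 ^ (a + 4) - 9 := by omega
    rw [e, sternF_odd _ (by omega), e3, e2, sternF_even _ (by
        have h3 : 8 ≤ 2 ^ (a + 3) := by
          calc 8 = 2 ^ 3 := rfl
          _ ≤ 2 ^ (a + 3) := Nat.pow_le_pow_right (by norm_num) (by omega)
        omega),
      sternF_pow_sub_five a, sternF_pow_sub_nine a, SS_one]
    ring
  | succ j ih =>
    have hQ : 1 ≤ 2 ^ (j + 1) := Nat.one_le_two_pow
    have hR : 16 ≤ 2 ^ (a + 4) := by
      calc 16 = 2 ^ 4 := rfl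
      _ ≤ 2 ^ (a + 4) := Nat.pow_le_pow_right (by norm_num) (by omega)
    have hPQR : 2 ^ (a + 5 + j) = 2 ^ (j + 1) * 2 ^ (a + 4) := by
      rw [← pow_add]; ring_nf
    have hP : 9 * 2 ^ (j + 1) + 2 ≤ 2 ^ (a + 5 + j) := by
      rw [hPQR]
      calc 9 * 2 ^ (j + 1) + 2 ≤ 16 * 2 ^ (j + 1) := by omega
      _ ≤ 2 ^ (j + 1) * 2 ^ (a + 4) := by rw [mul_comm 16]; exact Nat.mul_le_mul_left _ hR
    have e : 2 ^ (a + 5 + (j + 1)) - 9 * 2 ^ (j + 1 + 1) - 1 =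
        2 * (2 ^ (a + 5 + j) - 9 * 2 ^ (j + 1) - 1) + 1 := by
      have h1 : 2 ^ (a + 5 + (j + 1)) = 2 * 2 ^ (a + 5 + j) := by ring
      have h2 : 2 ^ (j + 1 + 1) = 2 * 2 ^ (j + 1) := by ring
      omega
    have e2 : 2 ^ (a + 5 + j) - 9 * 2 ^ (j + 1) - 1 + 1 =
        2 ^ (j + 1) * (2 ^ (a + 4) - 9) := by
      rw [Nat.mul_sub, ← hPQR]
      omega
    rw [e, sternF_odd _ (by omega), e2,
      sternF_two_pow_mul (j + 1) _ (by omega), sternF_pow_sub_nine a, ih,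
      show j + 1 + 1 = (j + 1) + 1 from rfl, SS_succ (j + 1)]
    ring

theorem stern_s_mod_two (n : ℕ) (hn : 1 ≤ n) :
    (sternPoly (sSeq n)).map (Int.castRingHom (ZMod 2)) =
      ∑ i ∈ Finset.range (2 * n + 2), (X : Polynomial (ZMod 2)) ^ i := by
  obtain ⟨m, rfl⟩ : ∃ m, n = m + 1 := ⟨n - 1, by omega⟩
  have key := sternF_chain m (m + 1)
  have harg : 2 ^ (m + 5 + (m + 1)) - 9 * 2 ^ (m + 1 + 1) - 1 = sSeq (m + 1) := by
    unfold sSeq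
    congr 2 <;> ring_nf
  rw [harg] at key
  have hgoal : (∑ i ∈ Finset.range (2 * (m + 1) + 2), (X : Polynomial (ZMod 2)) ^ i)
      = SS (m + 2) + X ^ (m + 2) * SS (m + 2) := by
    have : 2 * (m + 1) + 2 = (m + 2) + (m + 2) := by ring
    rw [this, Finset.sum_range_add, SS, Finset.mul_sum]
    congr 1
    refine Finset.sum_congr rfl fun i _ => ?_
    rw [pow_add]
  show sternF (sSeq (m + 1)) = _
  rw [key, hgoal]
  have h2 := two_eq_zero'
  linear_combination (X * SS (m + 2)) * h2
end
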